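/- Let (X, ν) be a probability space and T an invertible measure-preserving transformation of (X, ν). Then T is totally ergodic (i.e., T^i is ergodic for every nonzero integer i) if and only if for every Markov operator J on L²(X, ν) and every integer i > 0, the equality T̂^i ∘ J = J implies J = Θ. -/

import Mathlib

open MeasureTheory Filter
open scoped RealInnerProductSpace ENNReal

noncomputable section

variable {X : Type*} [MeasurableSpace X]

/-- The constant function `1` as an element of `L²(X, ν)`. -/
def oneL2 (ν : Measure X) [IsProbabilityMeasure ν] : Lp ℝ 2 ν :=
  Lp.const 2 ν (1 : ℝ)

/-- `J` is a Markov operator on `L²(X, ν)`: it is positivity preserving,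
`J 1 = 1` and `J* 1 = 1`. -/
structure IsMarkov (ν : Measure X) [IsProbabilityMeasure ν]
    (J : Lp ℝ 2 ν →L[ℝ] Lp ℝ 2 ν) : Prop where
  pos : ∀ f : Lp ℝ 2 ν, 0 ≤ f → 0 ≤ J f
  map_one : J (oneL2 ν) = oneL2 ν
  adjoint_map_one : (ContinuousLinearMap.adjoint J) (oneL2 ν) = oneL2 ν

/-- `Θ`, the orthogonal projection of `L²(X, ν)` onto the constants:
`Θ f = (∫ f dν) • 1 = ⟪1, f⟫ • 1`. -/
def Theta (ν : Measure X) [IsProbabilityMeasure ν] : Lp ℝ 2 ν →L[ℝ] Lp ℝ 2 ν :=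
  (innerSL ℝ (oneL2 ν)).smulRight (oneL2 ν)

/-- The Koopman operator `f ↦ f ∘ T` on `L²(X, ν)` of a measure-preserving map `T`. -/
def koopman (ν : Measure X) [IsProbabilityMeasure ν] {T : X → X}
    (hT : MeasurePreserving T ν ν) : Lp ℝ 2 ν →L[ℝ] Lp ℝ 2 ν where
  toFun := Lp.compMeasurePreserving T hT
  map_add' := map_add _
  map_smul' := by
    intro c g
    refine Lp.ext ?_
    have h1 := Lp.coeFn_compMeasurePreserving (μ := ν) (c • g) hT
    have h2 := (Lp.coeFn_smul c g).comp_tendsto hT.quasiMeasurePreserving.tendsto_ae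
    have h3 := Lp.coeFn_smul c (Lp.compMeasurePreserving T hT g)
    have h4 := Lp.coeFn_compMeasurePreserving (μ := ν) g hT
    filter_upwards [h1, h2, h3, h4] with x e1 e2 e3 e4
    simp only [Function.comp_apply, Pi.smul_apply, RingHom.id_apply] at *
    rw [e1, e2, e3, e4]
  cont := (Lp.isometry_compMeasurePreserving hT).continuous

/-- The map `T^i` for `i : ℤ`, where `T` is an invertible (bi-measurable) map. -/
def mpowZ (T : X ≃ᵐ X) : ℤ → X → X
  | Int.ofNat n => (⇑T)^[n]
  | Int.negSucc n => (⇑T.symm)^[n + 1]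

/-- `T` is totally ergodic: all nonzero powers of `T` are ergodic. -/
def TotallyErgodic (ν : Measure X) (T : X ≃ᵐ X) : Prop :=
  ∀ i : ℤ, i ≠ 0 → Ergodic (mpowZ T i) ν

/-- The Koopman operator of the power `T^i`, `i : ℤ`, of an invertible
measure-preserving transformation `T`. -/
def koopmanZ (ν : Measure X) [IsProbabilityMeasure ν] (T : X ≃ᵐ X)
    (hT : MeasurePreserving T ν ν) : ℤ → (Lp ℝ 2 ν →L[ℝ] Lp ℝ 2 ν)
  | Int.ofNat n => (koopman ν hT) ^ n
  | Int.negSucc n => (koopman ν (hT.symm T)) ^ (n + 1)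

/-!
If `T^n` is ergodic, the `T̂^n`-invariant functions are the constants, so a Markov operator `J`
with `T̂^n ∘ J = J` takes constant values, and `J f = ⟪1, J f⟫ • 1 = ⟪J* 1, f⟫ • 1 = Θ f`.

Conversely, the orthogonal projection onto the `T̂^n`-invariant functions is itself a Markov
operator absorbed by `T̂^n`: by von Neumann's mean ergodic theorem it is the strong limit of the
Birkhoff averages of the positive operator `T̂^n`, hence positive, and it is self-adjoint and
fixes `1`. So it equals `Θ`, which forces the indicator of every `T^n`-invariant set to be
constant: `T^n` is ergodic. Ergodicity of `T^(-n)` is the same statement, since `T^n` and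
`T^(-n)` have the same invariant sets.
-/

instance MeasureTheory.Lp.instPosSMulMono {p : ℝ≥0∞} (μ : Measure X) :
    PosSMulMono ℝ (Lp ℝ p μ) :=
  .of_smul_nonneg fun c hc f hf => by
    rw [← Lp.coeFn_nonneg] at hf ⊢
    filter_upwards [Lp.coeFn_smul c f, hf] with x hx hfx
    rw [hx]
    exact smul_nonneg hc hfx

theorem starProjection_eqLocus_one_apply_nonneg {μ : Measure X} {A : Lp ℝ 2 μ →L[ℝ] Lp ℝ 2 μ}
    (hA : ‖A‖ ≤ 1) (hA_pos : ∀ f, 0 ≤ f → 0 ≤ A f) {f : Lp ℝ 2 μ} (hf : 0 ≤ f) :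
    0 ≤ (A.eqLocus (1 : Lp ℝ 2 μ →L[ℝ] Lp ℝ 2 μ)).starProjection f := by
  have h_iter : ∀ k, 0 ≤ A^[k] f := by
    intro k
    induction k with
    | zero => exact hf
    | succ k ih => rw [Function.iterate_succ_apply']; exact hA_pos _ ih
  refine ge_of_tendsto' (A.tendsto_birkhoffAverage_orthogonalProjection hA f) fun N => ?_
  exact smul_nonneg (by positivity) (Finset.sum_nonneg fun k _ => h_iter k)

theorem MeasurableEquiv.preimage_iterate_eq_of_preimage_iterate_symm_eq (T : X ≃ᵐ X) {n : ℕ}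
    {s : Set X} (hs : (⇑T.symm)^[n] ⁻¹' s = s) : (⇑T)^[n] ⁻¹' s = s :=
  calc (⇑T)^[n] ⁻¹' s = (⇑T)^[n] ⁻¹' ((⇑T.symm)^[n] ⁻¹' s) := by rw [hs]
    _ = s := by
      rw [← Set.preimage_comp, (Function.LeftInverse.iterate T.symm_apply_apply n).comp_eq_id,
        Set.preimage_id]

theorem Ergodic.iterate_symm {ν : Measure X} {T : X ≃ᵐ X} (hT : MeasurePreserving T ν ν) {n : ℕ}
    (h : Ergodic (⇑T)^[n] ν) : Ergodic (⇑T.symm)^[n] ν where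
  toMeasurePreserving := (hT.symm T).iterate n
  aeconst_set _ hs hinv := h.aeconst_set hs (T.preimage_iterate_eq_of_preimage_iterate_symm_eq hinv)

theorem ergodic_mpowZ {ν : Measure X} {T : X ≃ᵐ X} (hT : MeasurePreserving T ν ν) {i : ℤ}
    (h : Ergodic (⇑T)^[i.natAbs] ν) : Ergodic (mpowZ T i) ν := by
  cases i with
  | ofNat n => exact h
  | negSucc n => exact h.iterate_symm hT

section

variable {ν : Measure X} [IsProbabilityMeasure ν] {S : X → X}

theorem koopman_apply (hS : MeasurePreserving S ν ν) (f : Lp ℝ 2 ν) :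
    koopman ν hS f = Lp.compMeasurePreserving S hS f :=
  rfl

theorem koopman_pow (hS : MeasurePreserving S ν ν) (n : ℕ) :
    koopman ν hS ^ n = koopman ν (hS.iterate n) :=
  DFunLike.coe_injective <| by
    rw [FunLike.coe_pow_eq_iterate]
    exact Lp.compMeasurePreserving_iterate hS n

theorem koopmanZ_natCast (T : X ≃ᵐ X) (hT : MeasurePreserving T ν ν) (n : ℕ) :
    koopmanZ ν T hT n = koopman ν (hT.iterate n) :=
  koopman_pow hT n

theorem koopman_nonneg (hS : MeasurePreserving S ν ν) {f : Lp ℝ 2 ν} (hf : 0 ≤ f) :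
    0 ≤ koopman ν hS f := by
  rw [← Lp.coeFn_nonneg] at hf ⊢
  filter_upwards [Lp.coeFn_compMeasurePreserving f hS, hS.quasiMeasurePreserving.ae hf]
    with x hx hfx
  rw [koopman_apply, hx]
  exact hfx

theorem koopman_oneL2 (hS : MeasurePreserving S ν ν) : koopman ν hS (oneL2 ν) = oneL2 ν :=
  rfl

theorem norm_koopman_le_one (hS : MeasurePreserving S ν ν) : ‖koopman ν hS‖ ≤ 1 :=
  ContinuousLinearMap.opNorm_le_bound _ zero_le_one fun f => by
    rw [one_mul, koopman_apply, Lp.norm_compMeasurePreserving]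

theorem koopman_indicatorConstLp (hS : MeasurePreserving S ν ν) {s : Set X}
    (hs : MeasurableSet s) (hSs : S ⁻¹' s = s) (c : ℝ) :
    koopman ν hS (indicatorConstLp 2 hs (measure_ne_top ν s) c) =
      indicatorConstLp 2 hs (measure_ne_top ν s) c := by
  rw [koopman_apply, Lp.indicatorConstLp_compMeasurePreserving]
  congr!

theorem inner_oneL2_oneL2 : ⟪oneL2 ν, oneL2 ν⟫ = 1 := by
  rw [real_inner_self_eq_norm_sq, oneL2, Lp.norm_const']
  all_goals simp

theorem Theta_apply (f : Lp ℝ 2 ν) : Theta ν f = ⟪oneL2 ν, f⟫ • oneL2 ν :=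
  rfl

theorem Theta_smul_oneL2 (c : ℝ) : Theta ν (c • oneL2 ν) = c • oneL2 ν := by
  rw [Theta_apply, real_inner_smul_right, inner_oneL2_oneL2, mul_one]

theorem Theta_comp_eq_of_adjoint_oneL2 {J : Lp ℝ 2 ν →L[ℝ] Lp ℝ 2 ν}
    (hJ : J.adjoint (oneL2 ν) = oneL2 ν) : Theta ν ∘L J = Theta ν := by
  ext1 f
  rw [ContinuousLinearMap.comp_apply, Theta_apply, Theta_apply,
    ← ContinuousLinearMap.adjoint_inner_left, hJ]

theorem coeFn_smul_oneL2 (c : ℝ) : ⇑(c • oneL2 ν) =ᵐ[ν] fun _ => c := by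
  filter_upwards [Lp.coeFn_smul c (oneL2 ν), Lp.coeFn_const (μ := ν) 2 (1 : ℝ)] with x hx h1
  rw [hx, Pi.smul_apply, oneL2, h1, Function.const_apply, smul_eq_mul, mul_one]

theorem Ergodic.Theta_eq_of_koopman_eq (h : Ergodic S ν) {f : Lp ℝ 2 ν}
    (hf : koopman ν h.toMeasurePreserving f = f) : Theta ν f = f := by
  have hinv : ⇑f ∘ S =ᵐ[ν] f := by
    simpa only [← koopman_apply, hf] using
      (Lp.coeFn_compMeasurePreserving f h.toMeasurePreserving).symm
  obtain ⟨c, hc⟩ := h.ae_eq_const_of_ae_eq_comp_ae (Lp.aestronglyMeasurable f) hinv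
  have hfc : f = c • oneL2 ν := Lp.ext (hc.trans (coeFn_smul_oneL2 c).symm)
  rw [hfc, Theta_smul_oneL2]

theorem Ergodic.eq_Theta (h : Ergodic S ν) {J : Lp ℝ 2 ν →L[ℝ] Lp ℝ 2 ν}
    (hJ : J.adjoint (oneL2 ν) = oneL2 ν) (hSJ : koopman ν h.toMeasurePreserving ∘L J = J) :
    J = Theta ν :=
  calc J = Theta ν ∘L J :=
        ContinuousLinearMap.ext fun f => (h.Theta_eq_of_koopman_eq congr($hSJ f)).symm
    _ = Theta ν := Theta_comp_eq_of_adjoint_oneL2 hJ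

theorem ergodic_of_forall_koopman_eq (hS : MeasurePreserving S ν ν)
    (h : ∀ f, koopman ν hS f = f → Theta ν f = f) : Ergodic S ν where
  toMeasurePreserving := hS
  aeconst_set s hs hSs := by
    set χ := indicatorConstLp 2 hs (measure_ne_top ν s) (1 : ℝ)
    have hχ : Theta ν χ = χ := h χ (koopman_indicatorConstLp hS hs hSs 1)
    have hconst : s.indicator (fun _ => (1 : ℝ)) =ᵐ[ν] fun _ => ⟪oneL2 ν, χ⟫ := by
      have hχ_ae : ⇑χ =ᵐ[ν] s.indicator fun _ => (1 : ℝ) := indicatorConstLp_coeFn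
      have hχ_const := coeFn_smul_oneL2 (ν := ν) ⟪oneL2 ν, χ⟫
      rw [← Theta_apply, hχ] at hχ_const
      exact hχ_ae.symm.trans hχ_const
    refine (((EventuallyConst.const _).congr hconst.symm).comp (· = (1 : ℝ))).congr
      (Eventually.of_forall fun x => ?_)
    show (s.indicator (fun _ => (1 : ℝ)) x = 1) = (x ∈ s)
    by_cases hx : x ∈ s <;> simp [hx]

def invariantProj (hS : MeasurePreserving S ν ν) : Lp ℝ 2 ν →L[ℝ] Lp ℝ 2 ν :=
  ((koopman ν hS).eqLocus (1 : Lp ℝ 2 ν →L[ℝ] Lp ℝ 2 ν)).starProjection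

theorem koopman_comp_invariantProj (hS : MeasurePreserving S ν ν) :
    koopman ν hS ∘L invariantProj hS = invariantProj hS :=
  ContinuousLinearMap.ext fun f =>
    Submodule.starProjection_apply_mem ((koopman ν hS).eqLocus (1 : Lp ℝ 2 ν →L[ℝ] Lp ℝ 2 ν)) f

theorem invariantProj_eq_self {hS : MeasurePreserving S ν ν} {f : Lp ℝ 2 ν}
    (hf : koopman ν hS f = f) : invariantProj hS f = f :=
  Submodule.starProjection_eq_self_iff.mpr hf

theorem isMarkov_invariantProj (hS : MeasurePreserving S ν ν) : IsMarkov ν (invariantProj hS) where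
  pos _ := starProjection_eqLocus_one_apply_nonneg (norm_koopman_le_one hS) fun _ => koopman_nonneg hS
  map_one := invariantProj_eq_self (koopman_oneL2 hS)
  adjoint_map_one := by
    rw [invariantProj, (isSelfAdjoint_starProjection _).adjoint_eq]
    exact invariantProj_eq_self (koopman_oneL2 hS)

theorem ergodic_of_forall_isMarkov (hS : MeasurePreserving S ν ν)
    (h : ∀ J, IsMarkov ν J → koopman ν hS ∘L J = J → J = Theta ν) : Ergodic S ν :=
  ergodic_of_forall_koopman_eq hS fun f hf => by
    rw [← h _ (isMarkov_invariantProj hS) (koopman_comp_invariantProj hS),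
      invariantProj_eq_self hf]

end

/-- `T` is totally ergodic iff for every Markov operator `J` and integer `i > 0`,
`T̂^i ∘ J = J` implies `J = Θ`. -/
theorem totallyErgodic_iff_markov {X : Type*} [MeasurableSpace X]
    (ν : Measure X) [IsProbabilityMeasure ν]
    (T : X ≃ᵐ X) (hT : MeasurePreserving (⇑T) ν ν) :
    TotallyErgodic ν T ↔
      ∀ J : Lp ℝ 2 ν →L[ℝ] Lp ℝ 2 ν, IsMarkov ν J →
        ∀ i : ℤ, 0 < i → koopmanZ ν T hT i ∘L J = J → J = Theta ν := by
  constructor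
  · intro hTE J hJ i hi hTJ
    lift i to ℕ using hi.le with n
    rw [koopmanZ_natCast] at hTJ
    exact (hTE n (by positivity)).eq_Theta hJ.adjoint_map_one hTJ
  · intro h i hi
    refine ergodic_mpowZ hT (ergodic_of_forall_isMarkov (hT.iterate _) fun J hJ hTJ => ?_)
    exact h J hJ i.natAbs (by omega) (by rwa [koopmanZ_natCast])
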